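/- arXiv:2012.00062 — 2 statements merged into one kernel-verified Lean document; each statement's English description precedes it below -/
import Mathlib

section
/- For |q|<1, the identity \sum_{n=0}^\infty (n + E_1^{(n)}(q)) / ((q;q)_n (q^{-1};q^{-1})_n) = 0 holds, where (q;q)_n = \prod_{j=1}^n (1-q^j) and (q^{-1};q^{-1})_n = \prod_{j=1}^n (1-q^{-j}). -/
/-- `E₁⁽ⁿ⁾(q) = ∑_{s≥1} q^{s(n+1)}/(1-q^s)`. -/
noncomputable def E1 (q : ℂ) (n : ℕ) : ℂ :=
  ∑' s : ℕ, q ^ ((s + 1) * (n + 1)) / (1 - q ^ (s + 1))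

/-- The finite q-Pochhammer symbol `(q;q)_n = ∏_{j=1}^n (1-q^j)`. -/
noncomputable def qPoch (q : ℂ) (n : ℕ) : ℂ :=
  ∏ j ∈ Finset.range n, (1 - q ^ (j + 1))

/-!
Multiply the series by `E(q) = ∑ (-1)^m q^{m(m-1)/2} q^m / (q;q)_m`, which is Euler's series for
`(z;q)_∞` at `z = q` and hence equals `(q;q)_∞ ≠ 0`. Since `E(q) = (q;q)_n E(q^{n+1})` and
`E₁⁽ⁿ⁾(q) E(q^{n+1}) = -(z ∂_z E)(q^{n+1})` (logarithmic derivative of `(z;q)_∞`), the `n`-th term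
times `E(q)` becomes `∑_m (n - m) c_n c_m q^{n+m+nm}` with `c_m` the Euler coefficients. This
double series converges absolutely and is antisymmetric in `(n, m)`, so it sums to zero.
-/

open Filter Topology

section PowerSeries

variable {a : ℕ → ℂ} {r : ℝ}

lemma summable_mul_pow_of_norm_le (ha : Summable fun m ↦ ‖a m‖ * r ^ m) {z : ℂ} (hz : ‖z‖ ≤ r) :
    Summable fun m ↦ a m * z ^ m :=
  ha.of_norm_bounded fun m ↦ by
    rw [norm_mul, norm_pow]
    gcongr

lemma tendsto_tsum_mul_pow_of_tendsto_zero {α : Type*} {l : Filter α} {f : α → ℂ}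
    (ha : Summable fun m ↦ ‖a m‖ * r ^ m) (hf : Tendsto f l (𝓝 0))
    (hfr : ∀ᶠ x in l, ‖f x‖ ≤ r) :
    Tendsto (fun x ↦ ∑' m, a m * f x ^ m) l (𝓝 (a 0)) := by
  have h := tendsto_tsum_of_dominated_convergence ha (fun m ↦ (hf.pow m).const_mul (a m))
    (hfr.mono fun x hx m ↦ by rw [norm_mul, norm_pow]; gcongr)
  rwa [tsum_eq_single 0 fun m hm ↦ by simp [hm], pow_zero, mul_one] at h

lemma summable_norm_natCast_pow_mul_mul_pow_of_bounded {C : ℝ} (hC : ∀ m, ‖a m‖ ≤ C) (k : ℕ)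
    (hr0 : 0 ≤ r) (hr1 : r < 1) : Summable fun m : ℕ ↦ ‖(m : ℂ) ^ k * a m‖ * r ^ m := by
  refine .of_nonneg_of_le (fun m ↦ by positivity) (fun m ↦ ?_)
    ((summable_pow_mul_geometric_of_norm_lt_one k (r := r)
      (by rwa [Real.norm_of_nonneg hr0])).mul_left C)
  rw [norm_mul, norm_pow, Complex.norm_natCast]
  calc (m : ℝ) ^ k * ‖a m‖ * r ^ m = ‖a m‖ * ((m : ℝ) ^ k * r ^ m) := by ring
    _ ≤ C * ((m : ℝ) ^ k * r ^ m) := by gcongr; exact hC m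

lemma tsum_mul_pow_sub_tsum_mul_mul_pow {c : ℕ → ℂ} {q z : ℂ}
    (hz : Summable fun m ↦ c m * z ^ m) (hqz : Summable fun m ↦ c m * (q * z) ^ m) :
    ∑' m, c m * z ^ m - ∑' m, c m * (q * z) ^ m
      = z * ∑' m, c (m + 1) * (1 - q ^ (m + 1)) * z ^ m := by
  rw [← hz.tsum_sub hqz, (hz.sub hqz).tsum_eq_zero_add, ← tsum_mul_left]
  simp only [pow_zero, mul_one, sub_self, zero_add]
  exact tsum_congr fun m ↦ by ring

end PowerSeries

lemma norm_mul_lt_one {q z : ℂ} (hq : ‖q‖ < 1) (hz : ‖z‖ < 1) : ‖q * z‖ < 1 := by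
  rw [norm_mul]; exact mul_lt_one_of_nonneg_of_lt_one_left (norm_nonneg q) hq hz.le

/-- No summability is needed: `tsum` commutes with negation and reindexing even where it takes
the junk value `0`. -/
lemma tsum_eq_zero_of_swap_eq_neg {ι E : Type*} [AddCommGroup E] [TopologicalSpace E]
    [IsTopologicalAddGroup E] [T2Space E] [IsAddTorsionFree E] {F : ι × ι → E}
    (hF : ∀ p, F p.swap = -F p) : ∑' p, F p = 0 := by
  refine self_eq_neg.1 ?_
  rw [← tsum_neg, ← (Equiv.prodComm ι ι).tsum_eq]
  exact tsum_congr hF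

lemma choose_two_succ (n : ℕ) : (n + 1).choose 2 = n.choose 2 + n := by
  rw [Nat.choose_succ_succ', Nat.choose_one_right, add_comm]

section

variable {q z : ℂ}

lemma qPoch_succ (q : ℂ) (n : ℕ) : qPoch q (n + 1) = qPoch q n * (1 - q ^ (n + 1)) :=
  Finset.prod_range_succ _ _

lemma one_sub_pow_succ_ne_zero (hq : ‖q‖ < 1) (j : ℕ) : 1 - q ^ (j + 1) ≠ 0 := by
  refine sub_ne_zero.2 fun h ↦ ?_
  have : ‖q ^ (j + 1)‖ < 1 := by rw [norm_pow]; exact pow_lt_one₀ (norm_nonneg q) hq (by omega)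
  simp [← h] at this

lemma qPoch_ne_zero (hq : ‖q‖ < 1) (n : ℕ) : qPoch q n ≠ 0 :=
  Finset.prod_ne_zero_iff.2 fun j _ ↦ one_sub_pow_succ_ne_zero hq j

lemma qPoch_inv_mul_pow_choose_two (hq0 : q ≠ 0) (n : ℕ) :
    qPoch q⁻¹ n * q ^ (n + 1).choose 2 = (-1) ^ n * qPoch q n := by
  induction n with
  | zero => simp [qPoch]
  | succ n ih =>
    have hstep : (1 - q⁻¹ ^ (n + 1)) * q ^ (n + 1) = -(1 - q ^ (n + 1)) := by
      rw [inv_pow, sub_mul, inv_mul_cancel₀ (pow_ne_zero _ hq0)]; ring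
    calc qPoch q⁻¹ (n + 1) * q ^ (n + 1 + 1).choose 2
        = qPoch q⁻¹ n * q ^ (n + 1).choose 2 * ((1 - q⁻¹ ^ (n + 1)) * q ^ (n + 1)) := by
          rw [qPoch_succ, choose_two_succ (n + 1), pow_add]; ring
      _ = (-1) ^ (n + 1) * qPoch q (n + 1) := by rw [ih, hstep, qPoch_succ]; ring

lemma inv_qPoch_mul_qPoch_inv (hq0 : q ≠ 0) (n : ℕ) :
    (qPoch q n * qPoch q⁻¹ n)⁻¹ = (-1) ^ n * q ^ (n + 1).choose 2 / qPoch q n ^ 2 := by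
  have h : qPoch q⁻¹ n = (-1) ^ n * qPoch q n / q ^ (n + 1).choose 2 :=
    eq_div_of_mul_eq (pow_ne_zero _ hq0) (qPoch_inv_mul_pow_choose_two hq0 n)
  have hsign : ((-1 : ℂ) ^ n)⁻¹ = (-1) ^ n := by rw [← inv_pow, inv_neg, inv_one]
  rw [h, mul_div_assoc', inv_div, mul_left_comm, ← sq, div_mul_eq_div_div,
    div_eq_mul_inv _ ((-1) ^ n), hsign]
  ring

lemma tendsto_qPoch (hq : ‖q‖ < 1) :
    Tendsto (qPoch q) atTop (𝓝 (∏' n, (1 - q ^ (n + 1)))) :=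
  (ModularForm.multipliable_one_sub_pow hq).tendsto_prod_tprod_nat

lemma tprod_one_sub_pow_ne_zero (hq : ‖q‖ < 1) : ∏' n, (1 - q ^ (n + 1)) ≠ 0 := by
  simp_rw [sub_eq_add_neg]
  refine tprod_one_add_ne_zero_of_summable (fun n ↦ ?_) ?_
  · rw [← sub_eq_add_neg]; exact one_sub_pow_succ_ne_zero hq n
  · simpa [norm_pow] using
      (summable_nat_add_iff 1).2 (summable_geometric_of_lt_one (norm_nonneg q) hq)

lemma exists_norm_inv_qPoch_le (hq : ‖q‖ < 1) : ∃ C, ∀ n, ‖(qPoch q n)⁻¹‖ ≤ C := by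
  obtain ⟨C, hC⟩ := isBounded_iff_forall_norm_le.1 <| Metric.isBounded_range_of_tendsto _
    ((tendsto_qPoch hq).inv₀ (tprod_one_sub_pow_ne_zero hq))
  exact ⟨C, fun n ↦ hC _ ⟨n, rfl⟩⟩

/-- Coefficients of Euler's series `∑ (-1)^m q^{m(m-1)/2} z^m / (q;q)_m = (z;q)_∞`. -/
noncomputable def eulerCoeff (q : ℂ) (m : ℕ) : ℂ := (-1) ^ m * q ^ m.choose 2 / qPoch q m

noncomputable def eulerSeries (q z : ℂ) : ℂ := ∑' m, eulerCoeff q m * z ^ m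

/-- `z ∂_z` applied termwise to `eulerSeries q z`. -/
noncomputable def eulerSeriesTheta (q z : ℂ) : ℂ := ∑' m : ℕ, (m : ℂ) * eulerCoeff q m * z ^ m

lemma eulerCoeff_succ_mul (hq : ‖q‖ < 1) (m : ℕ) :
    eulerCoeff q (m + 1) * (1 - q ^ (m + 1)) = -(q ^ m * eulerCoeff q m) := by
  have := qPoch_ne_zero hq m
  have := one_sub_pow_succ_ne_zero hq m
  rw [eulerCoeff, eulerCoeff, qPoch_succ, choose_two_succ, pow_add]
  field_simp
  ring

lemma exists_norm_eulerCoeff_le (hq : ‖q‖ < 1) : ∃ C, ∀ m, ‖eulerCoeff q m‖ ≤ C := by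
  obtain ⟨C, hC⟩ := exists_norm_inv_qPoch_le hq
  refine ⟨C, fun m ↦ ?_⟩
  rw [eulerCoeff, div_eq_mul_inv, norm_mul, norm_mul, norm_pow, norm_pow, norm_neg, norm_one,
    one_pow, one_mul]
  exact mul_le_of_le_one_left (norm_nonneg _) (pow_le_one₀ (norm_nonneg q) hq.le) |>.trans (hC m)

lemma summable_norm_natCast_pow_mul_eulerCoeff_mul_pow (hq : ‖q‖ < 1) (k : ℕ) {r : ℝ}
    (hr0 : 0 ≤ r) (hr1 : r < 1) :
    Summable fun m : ℕ ↦ ‖(m : ℂ) ^ k * eulerCoeff q m‖ * r ^ m :=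
  have ⟨_, hC⟩ := exists_norm_eulerCoeff_le hq
  summable_norm_natCast_pow_mul_mul_pow_of_bounded hC k hr0 hr1

lemma summable_eulerCoeff_mul_pow (hq : ‖q‖ < 1) (hz : ‖z‖ < 1) :
    Summable fun m ↦ eulerCoeff q m * z ^ m := by
  simpa using summable_mul_pow_of_norm_le
    (summable_norm_natCast_pow_mul_eulerCoeff_mul_pow hq 0 (norm_nonneg z) hz) le_rfl

lemma summable_natCast_mul_eulerCoeff_mul_pow (hq : ‖q‖ < 1) (hz : ‖z‖ < 1) :
    Summable fun m : ℕ ↦ (m : ℂ) * eulerCoeff q m * z ^ m := by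
  simpa using summable_mul_pow_of_norm_le
    (summable_norm_natCast_pow_mul_eulerCoeff_mul_pow hq 1 (norm_nonneg z) hz) le_rfl

lemma eulerSeries_eq_one_sub_mul (hq : ‖q‖ < 1) (hz : ‖z‖ < 1) :
    eulerSeries q z = (1 - z) * eulerSeries q (q * z) := by
  have h := tsum_mul_pow_sub_tsum_mul_mul_pow (summable_eulerCoeff_mul_pow hq hz)
    (summable_eulerCoeff_mul_pow hq (norm_mul_lt_one hq hz))
  have hshift : ∀ m, eulerCoeff q (m + 1) * (1 - q ^ (m + 1)) * z ^ m
      = -(eulerCoeff q m * (q * z) ^ m) := fun m ↦ by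
    rw [eulerCoeff_succ_mul hq, mul_pow]; ring
  rw [tsum_congr hshift, tsum_neg] at h
  rw [eulerSeries, eulerSeries]
  linear_combination h

lemma eulerSeriesTheta_eq (hq : ‖q‖ < 1) (hz : ‖z‖ < 1) :
    eulerSeriesTheta q z = (1 - z) * eulerSeriesTheta q (q * z) - z * eulerSeries q (q * z) := by
  have hqz := norm_mul_lt_one hq hz
  have h := tsum_mul_pow_sub_tsum_mul_mul_pow (summable_natCast_mul_eulerCoeff_mul_pow hq hz)
    (summable_natCast_mul_eulerCoeff_mul_pow hq hqz)
  have hshift : ∀ m : ℕ, ((m + 1 : ℕ) : ℂ) * eulerCoeff q (m + 1) * (1 - q ^ (m + 1)) * z ^ m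
      = -((m : ℂ) * eulerCoeff q m * (q * z) ^ m + eulerCoeff q m * (q * z) ^ m) := fun m ↦ by
    rw [mul_assoc _ (eulerCoeff q _), eulerCoeff_succ_mul hq, mul_pow]; push_cast; ring
  rw [tsum_congr hshift, tsum_neg, (summable_natCast_mul_eulerCoeff_mul_pow hq hqz).tsum_add
    (summable_eulerCoeff_mul_pow hq hqz)] at h
  rw [eulerSeriesTheta, eulerSeriesTheta, eulerSeries]
  linear_combination h

lemma tendsto_pow_succ_atTop (hq : ‖q‖ < 1) : Tendsto (fun N : ℕ ↦ q ^ (N + 1)) atTop (𝓝 0) :=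
  (tendsto_pow_atTop_nhds_zero_of_norm_lt_one hq).comp (tendsto_add_atTop_nat 1)

lemma norm_pow_succ_le (hq : ‖q‖ < 1) (N : ℕ) : ‖q ^ (N + 1)‖ ≤ ‖q‖ := by
  rw [norm_pow]; exact pow_le_of_le_one (norm_nonneg q) hq.le (by omega)

lemma tendsto_eulerSeries_pow_succ (hq : ‖q‖ < 1) :
    Tendsto (fun N : ℕ ↦ eulerSeries q (q ^ (N + 1))) atTop (𝓝 1) := by
  have h := tendsto_tsum_mul_pow_of_tendsto_zero (a := eulerCoeff q)
    (by simpa only [pow_zero, one_mul] using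
      summable_norm_natCast_pow_mul_eulerCoeff_mul_pow hq 0 (norm_nonneg q) hq)
    (tendsto_pow_succ_atTop hq) (.of_forall (norm_pow_succ_le hq))
  rwa [show eulerCoeff q 0 = 1 by simp [eulerCoeff, qPoch]] at h

lemma tendsto_eulerSeriesTheta_pow_succ (hq : ‖q‖ < 1) :
    Tendsto (fun N : ℕ ↦ eulerSeriesTheta q (q ^ (N + 1))) atTop (𝓝 0) := by
  have h := tendsto_tsum_mul_pow_of_tendsto_zero (a := fun m : ℕ ↦ (m : ℂ) * eulerCoeff q m)
    (by simpa only [pow_one] using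
      summable_norm_natCast_pow_mul_eulerCoeff_mul_pow hq 1 (norm_nonneg q) hq)
    (tendsto_pow_succ_atTop hq) (.of_forall (norm_pow_succ_le hq))
  rwa [Nat.cast_zero, zero_mul] at h

lemma eulerSeries_self_eq_qPoch_mul (hq : ‖q‖ < 1) (N : ℕ) :
    eulerSeries q q = qPoch q N * eulerSeries q (q ^ (N + 1)) := by
  induction N with
  | zero => simp [qPoch]
  | succ N ih =>
    rw [ih, eulerSeries_eq_one_sub_mul hq ((norm_pow_succ_le hq N).trans_lt hq), qPoch_succ,
      ← pow_succ']
    ring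

lemma eulerSeries_self_eq_tprod (hq : ‖q‖ < 1) :
    eulerSeries q q = ∏' n, (1 - q ^ (n + 1)) := by
  have h := (tendsto_qPoch hq).mul (tendsto_eulerSeries_pow_succ hq)
  rw [mul_one] at h
  refine tendsto_nhds_unique (tendsto_const_nhds.congr fun N ↦ ?_) h
  exact eulerSeries_self_eq_qPoch_mul hq N

lemma eulerSeries_self_ne_zero (hq : ‖q‖ < 1) : eulerSeries q q ≠ 0 := by
  rw [eulerSeries_self_eq_tprod hq]
  exact tprod_one_sub_pow_ne_zero hq

lemma norm_E1_term_le (hq : ‖q‖ < 1) (n s : ℕ) :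
    ‖q ^ ((s + 1) * (n + 1)) / (1 - q ^ (s + 1))‖ ≤ ‖q‖ ^ (s + 1) / (1 - ‖q‖) := by
  have hden : 1 - ‖q‖ ≤ ‖1 - q ^ (s + 1)‖ := by
    calc 1 - ‖q‖ ≤ ‖(1 : ℂ)‖ - ‖q ^ (s + 1)‖ := by
          rw [norm_one]; gcongr; exact norm_pow_succ_le hq s
      _ ≤ ‖1 - q ^ (s + 1)‖ := norm_sub_norm_le _ _
  rw [norm_div, norm_pow]
  exact div_le_div₀ (by positivity) (pow_le_pow_of_le_one (norm_nonneg q) hq.le (by nlinarith))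
    (by linarith) hden

lemma summable_E1_bound (hq : ‖q‖ < 1) :
    Summable fun s : ℕ ↦ ‖q‖ ^ (s + 1) / (1 - ‖q‖) :=
  ((summable_nat_add_iff 1).2 (summable_geometric_of_lt_one (norm_nonneg q) hq)).div_const _

lemma summable_E1_term (hq : ‖q‖ < 1) (n : ℕ) :
    Summable fun s : ℕ ↦ q ^ ((s + 1) * (n + 1)) / (1 - q ^ (s + 1)) :=
  (summable_E1_bound hq).of_norm_bounded (norm_E1_term_le hq n)

lemma E1_eq_E1_succ_add (hq : ‖q‖ < 1) (n : ℕ) :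
    E1 q n = E1 q (n + 1) + q ^ (n + 1) / (1 - q ^ (n + 1)) := by
  have hterm : ∀ s : ℕ, q ^ ((s + 1) * (n + 1)) / (1 - q ^ (s + 1))
      - q ^ ((s + 1) * (n + 1 + 1)) / (1 - q ^ (s + 1)) = q ^ (n + 1) * (q ^ (n + 1)) ^ s := by
    intro s
    rw [div_sub_div_same, div_eq_iff (one_sub_pow_succ_ne_zero hq s)]
    ring
  have hgeom : ∑' s : ℕ, q ^ (n + 1) * (q ^ (n + 1)) ^ s = q ^ (n + 1) / (1 - q ^ (n + 1)) := by
    rw [tsum_mul_left, tsum_geometric_of_norm_lt_one ((norm_pow_succ_le hq n).trans_lt hq),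
      div_eq_mul_inv]
  rw [← hgeom, ← tsum_congr hterm, (summable_E1_term hq n).tsum_sub (summable_E1_term hq (n + 1)),
    E1, E1]
  ring

lemma tendsto_E1_atTop (hq : ‖q‖ < 1) : Tendsto (E1 q) atTop (𝓝 0) := by
  have hterm : ∀ s : ℕ, Tendsto (fun N : ℕ ↦ q ^ ((s + 1) * (N + 1)) / (1 - q ^ (s + 1)))
      atTop (𝓝 0) := fun s ↦ by
    simpa [pow_mul] using ((tendsto_pow_succ_atTop (q := q ^ (s + 1))
      ((norm_pow_succ_le hq s).trans_lt hq)).div_const (1 - q ^ (s + 1)))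
  have h := tendsto_tsum_of_dominated_convergence (summable_E1_bound hq) hterm
    (.of_forall fun N s ↦ norm_E1_term_le hq N s)
  rw [tsum_zero] at h
  exact h

/-- The logarithmic derivative of `(z;q)_∞` at `z = q^{n+1}`. Both sides satisfy the same
first-order recursion in `n`, and `(q;q)_n` times their difference is constant in `n` and tends
to `0`. -/
lemma E1_mul_eulerSeries_pow_succ (hq : ‖q‖ < 1) (n : ℕ) :
    E1 q n * eulerSeries q (q ^ (n + 1)) = -eulerSeriesTheta q (q ^ (n + 1)) := by
  set R : ℕ → ℂ := fun N ↦ eulerSeriesTheta q (q ^ (N + 1)) + E1 q N * eulerSeries q (q ^ (N + 1))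
  have hstep : ∀ N, qPoch q (N + 1) * R (N + 1) = qPoch q N * R N := fun N ↦ by
    have hz := (norm_pow_succ_le hq N).trans_lt hq
    have := one_sub_pow_succ_ne_zero hq N
    simp only [R, eulerSeriesTheta_eq hq hz, eulerSeries_eq_one_sub_mul hq hz,
      E1_eq_E1_succ_add hq N, qPoch_succ, ← pow_succ']
    field_simp
    ring
  have hconst : ∀ N, qPoch q N * R N = R 0 := fun N ↦ by
    induction N with
    | zero => simp [qPoch]
    | succ N ih => rw [hstep, ih]
  have hlim : Tendsto (fun N ↦ qPoch q N * R N) atTop (𝓝 0) := by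
    simpa using (tendsto_qPoch hq).mul ((tendsto_eulerSeriesTheta_pow_succ hq).add
      ((tendsto_E1_atTop hq).mul (tendsto_eulerSeries_pow_succ hq)))
  have hR0 : R 0 = 0 :=
    tendsto_nhds_unique (tendsto_const_nhds.congr fun N ↦ (hconst N).symm) hlim
  have hRn : R n = 0 := by
    simpa [hR0, qPoch_ne_zero hq n] using hconst n
  linear_combination hRn

noncomputable def antisymmKernel (q : ℂ) (n m : ℕ) : ℂ :=
  ((n : ℂ) - m) * eulerCoeff q n * eulerCoeff q m * q ^ (n + m + n * m)

lemma eulerSeries_self_mul_term (hq0 : q ≠ 0) (hq : ‖q‖ < 1) (n : ℕ) :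
    eulerSeries q q * (((n : ℂ) + E1 q n) / (qPoch q n * qPoch q⁻¹ n))
      = ∑' m, antisymmKernel q n m := by
  have hz := (norm_pow_succ_le hq n).trans_lt hq
  have hrow : ((n : ℂ) + E1 q n) * eulerSeries q (q ^ (n + 1))
      = ∑' m : ℕ, ((n : ℂ) - m) * eulerCoeff q m * (q ^ (n + 1)) ^ m := by
    rw [add_mul, E1_mul_eulerSeries_pow_succ hq, eulerSeries, ← tsum_mul_left, ← sub_eq_add_neg,
      eulerSeriesTheta, ← ((summable_eulerCoeff_mul_pow hq hz).mul_left _).tsum_sub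
        (summable_natCast_mul_eulerCoeff_mul_pow hq hz)]
    exact tsum_congr fun m ↦ by ring
  rw [div_eq_mul_inv, inv_qPoch_mul_qPoch_inv hq0, eulerSeries_self_eq_qPoch_mul hq n,
    choose_two_succ, pow_add q (n.choose 2) n]
  calc qPoch q n * eulerSeries q (q ^ (n + 1))
        * ((n + E1 q n) * ((-1) ^ n * (q ^ n.choose 2 * q ^ n) / qPoch q n ^ 2))
      = ((n + E1 q n) * eulerSeries q (q ^ (n + 1))) * (eulerCoeff q n * q ^ n) := by
        have := qPoch_ne_zero hq n
        rw [eulerCoeff]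
        field_simp
    _ = ∑' m, antisymmKernel q n m := by
        rw [hrow, ← tsum_mul_right]
        exact tsum_congr fun m ↦ by rw [antisymmKernel]; ring

lemma summable_antisymmKernel (hq : ‖q‖ < 1) :
    Summable fun p : ℕ × ℕ ↦ antisymmKernel q p.1 p.2 := by
  obtain ⟨C, hC⟩ := exists_norm_eulerCoeff_le hq
  have hrow : Summable fun n : ℕ ↦ C * (((n : ℝ) + 1) * ‖q‖ ^ n) := by
    refine Summable.mul_left C ?_
    simpa [add_mul] using (summable_pow_mul_geometric_of_norm_lt_one 1 (r := ‖q‖)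
      (by simpa using hq)).add (summable_geometric_of_lt_one (norm_nonneg q) hq)
  have hC0 : 0 ≤ C := (norm_nonneg _).trans (hC 0)
  refine (hrow.mul_of_nonneg hrow (fun n ↦ by positivity) (fun n ↦ by positivity))
    |>.of_norm_bounded fun ⟨n, m⟩ ↦ ?_
  have hnm : ‖(n : ℂ) - m‖ ≤ ((n : ℝ) + 1) * ((m : ℝ) + 1) := by
    calc ‖(n : ℂ) - m‖ ≤ n + m := by simpa using norm_sub_le (n : ℂ) m
      _ ≤ ((n : ℝ) + 1) * ((m : ℝ) + 1) := by
          nlinarith [Nat.cast_nonneg (α := ℝ) n, Nat.cast_nonneg (α := ℝ) m]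
  have hpow : ‖q‖ ^ (n + m + n * m) ≤ ‖q‖ ^ n * ‖q‖ ^ m := by
    rw [← pow_add]; exact pow_le_pow_of_le_one (norm_nonneg q) hq.le (by omega)
  calc ‖antisymmKernel q n m‖
      = ‖(n : ℂ) - m‖ * ‖eulerCoeff q n‖ * ‖eulerCoeff q m‖ * ‖q‖ ^ (n + m + n * m) := by
        simp only [antisymmKernel, norm_mul, norm_pow]
    _ ≤ (((n : ℝ) + 1) * ((m : ℝ) + 1)) * C * C * (‖q‖ ^ n * ‖q‖ ^ m) := by gcongr <;> exact hC _
    _ = C * (((n : ℝ) + 1) * ‖q‖ ^ n) * (C * (((m : ℝ) + 1) * ‖q‖ ^ m)) := by ring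

end

theorem stmt_1 (q : ℂ) (hq0 : q ≠ 0) (hq : ‖q‖ < 1) :
    ∑' n : ℕ, ((n : ℂ) + E1 q n) / (qPoch q n * qPoch q⁻¹ n) = 0 := by
  refine (mul_eq_zero.1 ?_).resolve_left (eulerSeries_self_ne_zero hq)
  calc eulerSeries q q * ∑' n : ℕ, ((n : ℂ) + E1 q n) / (qPoch q n * qPoch q⁻¹ n)
      = ∑' n, ∑' m, antisymmKernel q n m := by
        rw [← tsum_mul_left]; exact tsum_congr (eulerSeries_self_mul_term hq0 hq)
    _ = ∑' p : ℕ × ℕ, antisymmKernel q p.1 p.2 := (summable_antisymmKernel hq).tsum_prod.symm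
    _ = 0 := tsum_eq_zero_of_swap_eq_neg fun p ↦ by
        simp only [antisymmKernel, Prod.fst_swap, Prod.snd_swap]; ring
end

section
/- Let G^0_m(q) = \sum_{n=0}^\infty (-1)^n q^{n(n+1)/2 + mn}/(q;q)_n^2 for |q|<1 and m \in \mathbb{Z}. Then G^0_m satisfies the linear q-difference equation G^0_{m+1}(q) - (2 - q^m) G^0_m(q) + G^0_{m-1}(q) = 0 for all m \in \mathbb{Z}. -/
/-- `G⁰_m(q) = ∑_{n≥0} (-1)^n q^{n(n+1)/2+mn}/(q;q)_n²`. -/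
noncomputable def G0 (q : ℂ) (m : ℤ) : ℂ :=
  ∑' n : ℕ, (-1 : ℂ) ^ n * q ^ (n * (n + 1) / 2) * q ^ (m * (n : ℤ)) / (qPoch q n) ^ 2

open Filter Topology

lemma Nat.succ_mul_succ_add_one_div_two (n : ℕ) :
    (n + 1) * (n + 1 + 1) / 2 = n * (n + 1) / 2 + (n + 1) := by
  have h : (n + 1) * (n + 1 + 1) = n * (n + 1) + 2 * (n + 1) := by ring
  rw [h, Nat.add_mul_div_left _ _ two_pos]

namespace G0

variable {q : ℂ}

lemma one_sub_pow_succ_ne_zero (hq : ‖q‖ < 1) (j : ℕ) : 1 - q ^ (j + 1) ≠ 0 := by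
  rw [sub_ne_zero, ne_comm]
  intro h
  have : ‖q‖ ^ (j + 1) < 1 := pow_lt_one₀ (norm_nonneg q) hq j.succ_ne_zero
  rw [← norm_pow, h, norm_one] at this
  exact this.false

lemma qPoch_succ (n : ℕ) : qPoch q (n + 1) = qPoch q n * (1 - q ^ (n + 1)) :=
  Finset.prod_range_succ _ _

lemma qPoch_ne_zero (hq : ‖q‖ < 1) (n : ℕ) : qPoch q n ≠ 0 :=
  Finset.prod_ne_zero_iff.mpr fun j _ ↦ one_sub_pow_succ_ne_zero hq j

noncomputable def term (q : ℂ) (m : ℤ) (n : ℕ) : ℂ :=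
  (-1 : ℂ) ^ n * q ^ (n * (n + 1) / 2) * q ^ (m * (n : ℤ)) / (qPoch q n) ^ 2

lemma term_ne_zero (hq0 : q ≠ 0) (hq : ‖q‖ < 1) (m : ℤ) (n : ℕ) : term q m n ≠ 0 := by
  unfold term
  have := qPoch_ne_zero hq n
  have := zpow_ne_zero (m * (n : ℤ)) hq0
  simp_all

lemma term_succ (hq0 : q ≠ 0) (hq : ‖q‖ < 1) (m : ℤ) (n : ℕ) :
    term q m (n + 1) = term q m n * (-(q ^ m * q ^ (n + 1)) / (1 - q ^ (n + 1)) ^ 2) := by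
  have := qPoch_ne_zero hq n
  have := one_sub_pow_succ_ne_zero hq n
  unfold term
  rw [Nat.succ_mul_succ_add_one_div_two, Nat.cast_succ, mul_add_one m, pow_succ (-1 : ℂ),
    pow_add q, zpow_add₀ hq0, qPoch_succ]
  field_simp

lemma summable_term (hq0 : q ≠ 0) (hq : ‖q‖ < 1) (m : ℤ) : Summable (term q m) := by
  refine summable_of_ratio_test_tendsto_lt_one zero_lt_one
    (Eventually.of_forall (term_ne_zero hq0 hq m)) ?_
  have hpow : Tendsto (fun n : ℕ ↦ q ^ (n + 1)) atTop (𝓝 0) :=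
    (tendsto_pow_atTop_nhds_zero_of_norm_lt_one hq).comp (tendsto_add_atTop_nat 1)
  have hratio : Tendsto (fun n : ℕ ↦ -(q ^ m * q ^ (n + 1)) / (1 - q ^ (n + 1)) ^ 2) atTop (𝓝 0) := by
    convert ((hpow.const_mul (q ^ m)).neg).div ((hpow.const_sub 1).pow 2) (by simp) using 2 <;> simp
  simpa [term_succ hq0 hq, norm_mul, term_ne_zero hq0 hq] using hratio.norm

lemma hasSum_term (hq0 : q ≠ 0) (hq : ‖q‖ < 1) (m : ℤ) : HasSum (term q m) (G0 q m) :=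
  (summable_term hq0 hq m).hasSum

lemma term_second_difference_eq (hq0 : q ≠ 0) (m : ℤ) (n : ℕ) :
    term q (m + 1) n - 2 * term q m n + term q (m - 1) n
      = term q m n * (1 - q ^ n) ^ 2 / q ^ n := by
  have hqn : q ^ n ≠ 0 := pow_ne_zero n hq0
  have hup : q ^ ((m + 1) * (n : ℤ)) = q ^ (m * (n : ℤ)) * q ^ n := by
    rw [add_one_mul, zpow_add₀ hq0, zpow_natCast]
  have hdown : q ^ ((m - 1) * (n : ℤ)) = q ^ (m * (n : ℤ)) / q ^ n := by
    rw [sub_one_mul, zpow_sub₀ hq0, zpow_natCast]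
  unfold term
  rw [hup, hdown]
  field_simp
  ring

lemma term_succ_mul_one_sub_pow_sq_div (hq0 : q ≠ 0) (hq : ‖q‖ < 1) (m : ℤ) (n : ℕ) :
    term q m (n + 1) * (1 - q ^ (n + 1)) ^ 2 / q ^ (n + 1) = -(q ^ m * term q m n) := by
  have := one_sub_pow_succ_ne_zero hq n
  have := pow_ne_zero (n + 1) hq0
  rw [term_succ hq0 hq]
  field_simp

lemma hasSum_second_difference (hq0 : q ≠ 0) (hq : ‖q‖ < 1) (m : ℤ) :
    HasSum (fun n ↦ term q (m + 1) n - 2 * term q m n + term q (m - 1) n) (-(q ^ m * G0 q m)) := by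
  simp_rw [term_second_difference_eq hq0]
  have htail : HasSum (fun n ↦ term q m (n + 1) * (1 - q ^ (n + 1)) ^ 2 / q ^ (n + 1))
      (-(q ^ m * G0 q m)) := by
    simp_rw [term_succ_mul_one_sub_pow_sq_div hq0 hq]
    exact ((hasSum_term hq0 hq m).mul_left (q ^ m)).neg
  simpa using htail.zero_add (f := fun n ↦ term q m n * (1 - q ^ n) ^ 2 / q ^ n)

end G0

theorem stmt_6 (q : ℂ) (hq0 : q ≠ 0) (hq : ‖q‖ < 1) (m : ℤ) :
    G0 q (m + 1) - (2 - q ^ m) * G0 q m + G0 q (m - 1) = 0 := by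
  have hsum := G0.hasSum_term hq0 hq
  have hsecond_difference : G0 q (m + 1) - 2 * G0 q m + G0 q (m - 1) = -(q ^ m * G0 q m) :=
    (((hsum (m + 1)).sub ((hsum m).mul_left 2)).add (hsum (m - 1))).unique
      (G0.hasSum_second_difference hq0 hq m)
  linear_combination hsecond_difference
end
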